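/- Let F₀ = {i_{nm} : B_n → B_m : n ≤ m < ω} be a complete iteration system such that B₀ contains a strictly decreasing sequence ⟨a_n : n < ω⟩ with ⋀_{n<ω} a_n = 0, and such that for every n ≥ 1 there exists d_n ∈ B_n with π_{n-1,n}(d_n) = π_{n-1,n}(¬d_n) = 1. Then there exist threads f, g ∈ T(F₀) which are incompatible in T(F₀) (no nonzero thread h satisfies h ≤ f and h ≤ g) but such that f(n) ∧ g(n) > 0 in B_n for every n < ω. -/

import Mathlib

/-- A complete iteration system of complete Boolean algebras indexed by `ι`:
regular embeddings `emb : B a → B b` for `a ≤ b` (injective Boolean algebra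
homomorphisms preserving arbitrary suprema) which commute and are the identity
on the diagonal. -/
structure IterSys (ι : Type*) [Preorder ι] where
  B : ι → Type*
  cba : ∀ a, CompleteBooleanAlgebra (B a)
  emb : ∀ {a b : ι}, a ≤ b → B a → B b
  emb_refl : ∀ (a : ι) (x : B a), emb (le_refl a) x = x
  emb_trans : ∀ {a b c : ι} (hab : a ≤ b) (hbc : b ≤ c) (x : B a),
    emb hbc (emb hab x) = emb (hab.trans hbc) x
  emb_inj : ∀ {a b : ι} (h : a ≤ b), Function.Injective (emb h)
  emb_sSup : ∀ {a b : ι} (h : a ≤ b) (S : Set (B a)), emb h (sSup S) = sSup (emb h '' S)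
  emb_inf : ∀ {a b : ι} (h : a ≤ b) (x y : B a), emb h (x ⊓ y) = emb h x ⊓ emb h y
  emb_compl : ∀ {a b : ι} (h : a ≤ b) (x : B a), emb h xᶜ = (emb h x)ᶜ
  emb_top : ∀ {a b : ι} (h : a ≤ b), emb h (⊤ : B a) = (⊤ : B b)

attribute [instance] IterSys.cba

namespace IterSys

variable {ι : Type*} [Preorder ι] (F : IterSys ι)

/-- The retraction `π_{a b}` associated to the regular embedding `i_{a b}`. -/
def ret {a b : ι} (h : a ≤ b) (c : F.B b) : F.B a :=
  sInf {x : F.B a | c ≤ F.emb h x}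

/-- A thread of the iteration system (an element of the inverse limit `T(F)`). -/
def IsThread (f : ∀ a, F.B a) : Prop :=
  ∀ {a b : ι} (h : a ≤ b), F.ret h (f b) = f a

/-- A constant thread (an element of the direct limit `C(F)`). -/
def IsConstThread (f : ∀ a, F.B a) : Prop :=
  F.IsThread f ∧ ∃ a : ι, ∀ (b : ι) (h : a ≤ b), f b = F.emb h (f a)

/-- The pointwise order on threads. -/
def ThreadLE (f g : ∀ a, F.B a) : Prop := ∀ a, f a ≤ g a

/-- A thread is nonzero if some (equivalently, cofinally many) of its coordinates
are nonzero. -/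
def NonzeroThread (f : ∀ a, F.B a) : Prop := ∃ a, f a ≠ ⊥

/-- Two threads are compatible in `T(F)` if some nonzero thread lies below both. -/
def Compat (f g : ∀ a, F.B a) : Prop :=
  ∃ h, F.IsThread h ∧ F.NonzeroThread h ∧ F.ThreadLE h f ∧ F.ThreadLE h g

/-- Two constant threads are compatible in `C(F)` if some nonzero constant thread
lies below both. -/
def ConstCompat (f g : ∀ a, F.B a) : Prop :=
  ∃ h, F.IsConstThread h ∧ F.NonzeroThread h ∧ F.ThreadLE h f ∧ F.ThreadLE h g

end IterSys

/-!
Cut `a 0` into the disjoint pieces `a k \ a (k + 1)`. The threads `f` and `g` both contain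
`a n` at stage `n`, while at stage `k + 1` the piece `a k \ a (k + 1)` is split by `d k` in `f`
and by `(d k)ᶜ` in `g`. Since `π(d k) = π((d k)ᶜ) = 1`, both sequences are threads, and
`f n ⊓ g n = a n ≠ 0`. A thread below both has its `0`-th coordinate below every `a n`,
hence zero, and a thread with zero `0`-th coordinate is zero.
-/

lemma sdiff_sup_inf_inf_sdiff_sup_inf {α : Type*} [BooleanAlgebra α] {x y c d d' : α}
    (h : Disjoint d d') : (x \ c ⊔ c ⊓ d) ⊓ (y \ c ⊔ c ⊓ d') = (x ⊓ y) \ c := by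
  rw [inf_sup_left, inf_sup_right, inf_sup_right, ← inf_sdiff,
    (disjoint_sdiff_self_right.mono_left inf_le_left : Disjoint (c ⊓ d) (y \ c)).eq_bot,
    (disjoint_sdiff_self_left.mono_right inf_le_left : Disjoint (x \ c) (c ⊓ d')).eq_bot,
    (h.mono inf_le_right inf_le_right : Disjoint (c ⊓ d) (c ⊓ d')).eq_bot]
  simp only [sup_bot_eq]

namespace IterSys

section Retraction

variable {ι : Type*} [Preorder ι] (F : IterSys ι) {a b c : ι}

lemma emb_mono (h : a ≤ b) : Monotone (F.emb h) := fun x y hxy =>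
  calc F.emb h x = F.emb h x ⊓ F.emb h y := by rw [← F.emb_inf, inf_eq_left.mpr hxy]
    _ ≤ F.emb h y := inf_le_right

lemma emb_le_emb_iff (h : a ≤ b) {x y : F.B a} : F.emb h x ≤ F.emb h y ↔ x ≤ y := by
  simp only [← inf_eq_left, ← F.emb_inf, (F.emb_inj h).eq_iff]

lemma emb_bot (h : a ≤ b) : F.emb h (⊥ : F.B a) = ⊥ := by
  rw [← compl_top, F.emb_compl, F.emb_top, compl_top]

lemma emb_eq_bot_iff (h : a ≤ b) {x : F.B a} : F.emb h x = ⊥ ↔ x = ⊥ := by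
  rw [← F.emb_bot h, (F.emb_inj h).eq_iff]

lemma emb_sup (h : a ≤ b) (x y : F.B a) : F.emb h (x ⊔ y) = F.emb h x ⊔ F.emb h y := by
  rw [← compl_compl (x ⊔ y), compl_sup, F.emb_compl, F.emb_inf, F.emb_compl, F.emb_compl,
    compl_inf, compl_compl, compl_compl]

lemma emb_himp (h : a ≤ b) (x y : F.B a) : F.emb h (x ⇨ y) = F.emb h x ⇨ F.emb h y := by
  rw [himp_eq, himp_eq, F.emb_sup, F.emb_compl]

lemma emb_sdiff (h : a ≤ b) (x y : F.B a) : F.emb h (x \ y) = F.emb h x \ F.emb h y := by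
  rw [sdiff_eq, sdiff_eq, F.emb_inf, F.emb_compl]

lemma emb_sInf (h : a ≤ b) (S : Set (F.B a)) : F.emb h (sInf S) = sInf (F.emb h '' S) := by
  rw [← compl_compl (sInf S), compl_sInf', F.emb_compl, F.emb_sSup, compl_sSup',
    Set.image_image, Set.image_image]
  simp only [F.emb_compl, compl_compl]

lemma gc_ret_emb (h : a ≤ b) : GaloisConnection (F.ret h) (F.emb h) := by
  have le_emb_ret : ∀ y, y ≤ F.emb h (F.ret h y) := fun y => by
    rw [ret, F.emb_sInf]
    exact le_sInf (by rintro _ ⟨z, hz, rfl⟩; exact hz)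
  exact fun y x => ⟨fun hyx => (le_emb_ret y).trans (F.emb_mono h hyx), fun hyx => sInf_le hyx⟩

lemma ret_emb (h : a ≤ b) (x : F.B a) : F.ret h (F.emb h x) = x := by
  simp only [ret, F.emb_le_emb_iff]
  exact isGLB_Ici.sInf_eq

lemma ret_emb_inf (h : a ≤ b) (x : F.B a) (y : F.B b) :
    F.ret h (F.emb h x ⊓ y) = x ⊓ F.ret h y := by
  refine eq_of_forall_ge_iff fun z => ?_
  rw [F.gc_ret_emb h, inf_comm, ← le_himp_iff, ← F.emb_himp, ← F.gc_ret_emb h, le_himp_iff,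
    inf_comm]

lemma ret_refl (x : F.B a) : F.ret (le_refl a) x = x := by
  simp only [ret, F.emb_refl]
  exact isGLB_Ici.sInf_eq

lemma ret_ret (hab : a ≤ b) (hbc : b ≤ c) (x : F.B c) :
    F.ret hab (F.ret hbc x) = F.ret (hab.trans hbc) x :=
  ((F.gc_ret_emb hbc).compose (F.gc_ret_emb hab)).l_unique (F.gc_ret_emb (hab.trans hbc))
    (F.emb_trans hab hbc)

variable {F}

lemma IsThread.le_emb {f : ∀ a, F.B a} (hf : F.IsThread f) (h : a ≤ b) :
    f b ≤ F.emb h (f a) :=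
  hf h ▸ (F.gc_ret_emb h).le_u_l (f b)

lemma IsThread.le_of_le_emb {f : ∀ a, F.B a} (hf : F.IsThread f) (h : a ≤ b) {x : F.B a}
    (hx : f b ≤ F.emb h x) : f a ≤ x :=
  hf h ▸ (F.gc_ret_emb h).l_le hx

end Retraction

section Nat

variable (F : IterSys ℕ)

lemma isThread_of_ret_succ (f : ∀ n, F.B n)
    (hf : ∀ n, F.ret n.le_succ (f (n + 1)) = f n) : F.IsThread f := by
  intro m n h
  induction n, h using Nat.le_induction with
  | base => exact F.ret_refl (f m)
  | succ n hmn ih => rw [← F.ret_ret hmn n.le_succ, hf n, ih]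

def splitSeq (x₀ : F.B 0) (c : ∀ n, F.B n) (d : ∀ n, F.B (n + 1)) : ∀ n, F.B n
  | 0 => x₀
  | n + 1 => F.emb n.le_succ (splitSeq x₀ c d n \ c n) ⊔ F.emb n.le_succ (c n) ⊓ d n

variable {F} {x₀ : F.B 0} {c : ∀ n, F.B n}

lemma splitSeq_inf_splitSeq {d d' : ∀ n, F.B (n + 1)} (hd : ∀ n, Disjoint (d n) (d' n))
    {m : ∀ n, F.B n} (hm₀ : m 0 = x₀) (hm : ∀ n, F.emb n.le_succ (m n \ c n) = m (n + 1))
    (n : ℕ) : F.splitSeq x₀ c d n ⊓ F.splitSeq x₀ c d' n = m n := by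
  induction n with
  | zero => exact (inf_idem x₀).trans hm₀.symm
  | succ n ih =>
    rw [splitSeq, splitSeq, ← hm, ← ih, F.emb_sdiff, F.emb_sdiff, F.emb_sdiff, F.emb_inf]
    exact sdiff_sup_inf_inf_sdiff_sup_inf (hd n)

lemma isThread_splitSeq {d : ∀ n, F.B (n + 1)} (hd : ∀ n, F.ret n.le_succ (d n) = ⊤)
    (hc : ∀ n, c n ≤ F.splitSeq x₀ c d n) : F.IsThread (F.splitSeq x₀ c d) :=
  F.isThread_of_ret_succ _ fun n => by
    rw [splitSeq, (F.gc_ret_emb _).l_sup, F.ret_emb, F.ret_emb_inf, hd, inf_top_eq,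
      sdiff_sup_cancel (hc n)]

lemma not_compat_of_inf_eq_emb {f g : ∀ n, F.B n} {a : ℕ → F.B 0} (ha : ⨅ n, a n = ⊥)
    (hfg : ∀ n, f n ⊓ g n = F.emb (Nat.zero_le n) (a n)) : ¬ F.Compat f g := by
  rintro ⟨h, hh, ⟨n, hn⟩, hhf, hhg⟩
  have h₀ : h 0 = ⊥ := le_bot_iff.mp <| ha ▸ le_iInf fun k =>
    hh.le_of_le_emb (Nat.zero_le k) ((le_inf (hhf k) (hhg k)).trans (hfg k).le)
  exact hn (le_bot_iff.mp ((hh.le_emb (Nat.zero_le n)).trans (by rw [h₀, F.emb_bot])))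

end Nat

end IterSys

/-- Let `F₀` be a complete iteration system of length `ω` such that
`B 0` contains a strictly decreasing sequence `⟨a n⟩` with `⨅ n, a n = ⊥`, and such
that for every `n` there is `d ∈ B (n+1)` with `π_{n,n+1}(d) = π_{n,n+1}(dᶜ) = ⊤`.
Then there are threads `f, g ∈ T(F₀)` which are incompatible in `T(F₀)` but such that
`f n ⊓ g n > ⊥` in `B n` for every `n`. -/
theorem stmt12 (F : IterSys ℕ)
    (a : ℕ → F.B 0) (hdec : ∀ n : ℕ, a (n + 1) < a n) (hbot : (⨅ n : ℕ, a n) = ⊥)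
    (hgen : ∀ n : ℕ, ∃ d : F.B (n + 1),
      F.ret (Nat.le_succ n) d = ⊤ ∧ F.ret (Nat.le_succ n) dᶜ = ⊤) :
    ∃ f g : ∀ n, F.B n, F.IsThread f ∧ F.IsThread g ∧
      ¬ F.Compat f g ∧ ∀ n : ℕ, f n ⊓ g n ≠ ⊥ := by
  choose d hd hdc using hgen
  let c : ∀ n, F.B n := fun n => F.emb (Nat.zero_le n) (a n \ a (n + 1))
  have hfg : ∀ n, F.splitSeq (a 0) c d n ⊓ F.splitSeq (a 0) c (fun n => (d n)ᶜ) n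
      = F.emb (Nat.zero_le n) (a n) :=
    IterSys.splitSeq_inf_splitSeq (fun _ => disjoint_compl_right) (F.emb_refl 0 (a 0))
      fun n => by
        rw [← F.emb_sdiff, F.emb_trans, sdiff_sdiff_right_self, inf_eq_right.mpr (hdec n).le]
  have hc : ∀ n, c n ≤ F.emb (Nat.zero_le n) (a n) := fun n => F.emb_mono _ sdiff_le
  refine ⟨_, _,
    IterSys.isThread_splitSeq hd fun n => (hc n).trans ((hfg n).ge.trans inf_le_left),
    IterSys.isThread_splitSeq hdc fun n => (hc n).trans ((hfg n).ge.trans inf_le_right),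
    IterSys.not_compat_of_inf_eq_emb hbot hfg, fun n => ?_⟩
  rw [hfg n, Ne, F.emb_eq_bot_iff]
  exact (bot_le.trans_lt (hdec n)).ne'
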